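/- arXiv:2412.04823 — 4 statements merged into one kernel-verified Lean document; each statement's English description precedes it below -/
import Mathlib

section
/- Let q ∈ ℂ with |q| < 1 and let B be a complex unital Banach algebra with elements x, y satisfying y·x = q·(x·y). Then for any finitely supported coefficients a_{ik} (i,k ≥ 1), the element f = Σ_{i,k≥1} a_{ik} x^i y^k satisfies ‖f^s‖ ≤ |q|^(s(s−1)/2) · ρ_f^s for all s ≥ 1, where ρ_f = Σ_{i,k≥1} |a_{ik}| ρ^(i+k) and ρ ≥ max(‖x‖, ‖y‖). -/
section aux
variable {B : Type*} [NormedRing B] [NormedAlgebra ℂ B]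
  (q : ℂ) (x y : B)

lemma qaux1 (h : y * x = q • (x * y)) (i : ℕ) : y * x ^ i = q ^ i • (x ^ i * y) := by
  induction i with
  | zero => simp
  | succ i ih =>
    rw [pow_succ, ← mul_assoc, ih, smul_mul_assoc, mul_assoc, h, mul_smul_comm, smul_smul,
      ← pow_succ, mul_assoc]

lemma qaux2 (h : y * x = q • (x * y)) (i k : ℕ) : y ^ k * x ^ i = q ^ (i * k) • (x ^ i * y ^ k) := by
  induction k with
  | zero => simp
  | succ k ih =>
    rw [pow_succ, mul_assoc, qaux1 q x y h, mul_smul_comm, ← mul_assoc, ih, smul_mul_assoc,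
      smul_smul, mul_assoc, ← pow_succ, ← pow_add]
    ring_nf

lemma qaux3 (h : y * x = q • (x * y)) (i₁ k₁ i₂ k₂ : ℕ) :
    (x ^ i₁ * y ^ k₁) * (x ^ i₂ * y ^ k₂)
      = q ^ (i₂ * k₁) • (x ^ (i₁ + i₂) * y ^ (k₁ + k₂)) := by
  calc (x ^ i₁ * y ^ k₁) * (x ^ i₂ * y ^ k₂)
      = x ^ i₁ * (y ^ k₁ * x ^ i₂) * y ^ k₂ := by rw [mul_assoc, mul_assoc, mul_assoc]
    _ = q ^ (i₂ * k₁) • (x ^ (i₁ + i₂) * y ^ (k₁ + k₂)) := by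
        rw [qaux2 q x y h, mul_smul_comm, smul_mul_assoc, pow_add, pow_add]
        congr 1
        simp [mul_assoc]

end aux

/-- In a complex unital Banach algebra with `y * x = q • (x * y)`, `|q| < 1`, a finite sum
`f = Σ_{i,k ≥ 1} a_{ik} x^i y^k` satisfies `‖f^s‖ ≤ |q|^(s(s-1)/2) · ρ_f^s` for all `s ≥ 1`,
where `ρ_f = Σ |a_{ik}| ρ^(i+k)` and `ρ ≥ max(‖x‖, ‖y‖)`. -/
theorem quantum_plane_power_norm_bound {B : Type*} [NormedRing B] [NormedAlgebra ℂ B]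
    (q : ℂ) (hq : ‖q‖ < 1) (x y : B) (h : y * x = q • (x * y))
    (a : ℕ × ℕ →₀ ℂ) (hsupp : ∀ p ∈ a.support, 1 ≤ p.1 ∧ 1 ≤ p.2)
    (ρ : ℝ) (hρ : max ‖x‖ ‖y‖ ≤ ρ)
    (f : B) (hf : f = a.sum fun p c => c • (x ^ p.1 * y ^ p.2))
    (ρf : ℝ) (hρf : ρf = a.sum fun p c => ‖c‖ * ρ ^ (p.1 + p.2)) :
    ∀ s : ℕ, 1 ≤ s → ‖f ^ s‖ ≤ ‖q‖ ^ (s * (s - 1) / 2) * ρf ^ s := by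
  have hx : ‖x‖ ≤ ρ := le_trans (le_max_left _ _) hρ
  have hy : ‖y‖ ≤ ρ := le_trans (le_max_right _ _) hρ
  have hρ0 : (0 : ℝ) ≤ ρ := le_trans (norm_nonneg x) hx
  have hρf0 : 0 ≤ ρf := by
    rw [hρf, Finsupp.sum]
    exact Finset.sum_nonneg fun p _ => mul_nonneg (norm_nonneg _) (pow_nonneg hρ0 _)
  have key : ∀ s : ℕ, 1 ≤ s → ∃ (ι : Type) (S : Finset ι) (c : ι → ℂ) (e : ι → ℕ × ℕ),
      (∀ j ∈ S, s ≤ (e j).1 ∧ s ≤ (e j).2) ∧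
      f ^ s = ∑ j ∈ S, c j • (x ^ (e j).1 * y ^ (e j).2) ∧
      ∑ j ∈ S, ‖c j‖ * ρ ^ ((e j).1 + (e j).2) ≤ ‖q‖ ^ (s * (s - 1) / 2) * ρf ^ s := by
    intro s hs
    induction s with
    | zero => omega
    | succ s ih =>
      rcases Nat.eq_zero_or_pos s with rfl | hs1
      · -- base case s + 1 = 1
        refine ⟨ℕ × ℕ, a.support, a, id, hsupp, ?_, ?_⟩
        · rw [pow_one, hf, Finsupp.sum]; simp only [id]
        · rw [hρf, Finsupp.sum]
          simp
      · obtain ⟨ι, S, c, e, hS, hrep, hbound⟩ := ih hs1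
        refine ⟨ι × (ℕ × ℕ), S ×ˢ a.support,
          fun jp => c jp.1 * a jp.2 * q ^ (jp.2.1 * (e jp.1).2),
          fun jp => ((e jp.1).1 + jp.2.1, (e jp.1).2 + jp.2.2), ?_, ?_, ?_⟩
        · rintro ⟨j, p⟩ hjp
          rw [Finset.mem_product] at hjp
          have h1 := hS j hjp.1
          have h2 := hsupp p hjp.2
          constructor <;> simp <;> omega
        · rw [pow_succ, hrep, hf, Finsupp.sum, Finset.sum_mul_sum, Finset.sum_product]
          refine Finset.sum_congr rfl fun j hj => Finset.sum_congr rfl fun p hp => ?_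
          rw [smul_mul_smul_comm, qaux3 q x y h, smul_smul]
        · have hexp : (s + 1) * ((s + 1) - 1) / 2 = s + s * (s - 1) / 2 := by
            obtain ⟨t, rfl⟩ : ∃ t, s = t + 1 := ⟨s - 1, by omega⟩
            simp only [Nat.add_sub_cancel]
            have e1 : (t + 1 + 1) * (t + 1) = t * t + 3 * t + 2 := by ring
            have e2 : (t + 1) * t = t * t + t := by ring
            rw [e1, e2]
            generalize t * t = k
            omega
          rw [Finset.sum_product, hexp, pow_add, pow_succ (ρf)]
          have step : ∀ j ∈ S, ∀ p ∈ a.support,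
              ‖c j * a p * q ^ (p.1 * (e j).2)‖ *
                ρ ^ ((e j).1 + p.1 + ((e j).2 + p.2)) ≤
              ‖q‖ ^ s * ((‖c j‖ * ρ ^ ((e j).1 + (e j).2)) * (‖a p‖ * ρ ^ (p.1 + p.2))) := by
            intro j hj p hp
            have hE : s ≤ p.1 * (e j).2 := by
              have := (hS j hj).2
              have := (hsupp p hp).1
              calc s ≤ (e j).2 := (hS j hj).2
                _ ≤ p.1 * (e j).2 := Nat.le_mul_of_pos_left _ (hsupp p hp).1
            have hq' : ‖q ^ (p.1 * (e j).2)‖ ≤ ‖q‖ ^ s := by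
              rw [norm_pow]
              exact pow_le_pow_of_le_one (norm_nonneg q) hq.le hE
            have hrw : ρ ^ ((e j).1 + p.1 + ((e j).2 + p.2))
                = ρ ^ ((e j).1 + (e j).2) * ρ ^ (p.1 + p.2) := by
              rw [← pow_add]; ring_nf
            rw [norm_mul, norm_mul, hrw]
            calc ‖c j‖ * ‖a p‖ * ‖q ^ (p.1 * (e j).2)‖ *
                  (ρ ^ ((e j).1 + (e j).2) * ρ ^ (p.1 + p.2))
                ≤ ‖c j‖ * ‖a p‖ * ‖q‖ ^ s *
                  (ρ ^ ((e j).1 + (e j).2) * ρ ^ (p.1 + p.2)) := by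
                  gcongr
              _ = ‖q‖ ^ s * ((‖c j‖ * ρ ^ ((e j).1 + (e j).2)) * (‖a p‖ * ρ ^ (p.1 + p.2))) := by
                  ring
          calc ∑ j ∈ S, ∑ p ∈ a.support,
                ‖c j * a p * q ^ (p.1 * (e j).2)‖ * ρ ^ ((e j).1 + p.1 + ((e j).2 + p.2))
              ≤ ∑ j ∈ S, ∑ p ∈ a.support,
                ‖q‖ ^ s * ((‖c j‖ * ρ ^ ((e j).1 + (e j).2)) * (‖a p‖ * ρ ^ (p.1 + p.2))) :=
                Finset.sum_le_sum fun j hj => Finset.sum_le_sum fun p hp => step j hj p hp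
            _ = ‖q‖ ^ s * ((∑ j ∈ S, ‖c j‖ * ρ ^ ((e j).1 + (e j).2)) *
                  (∑ p ∈ a.support, ‖a p‖ * ρ ^ (p.1 + p.2))) := by
                rw [Finset.sum_mul_sum, Finset.mul_sum]
                exact Finset.sum_congr rfl fun j _ => by rw [Finset.mul_sum]
            _ = ‖q‖ ^ s * ((∑ j ∈ S, ‖c j‖ * ρ ^ ((e j).1 + (e j).2)) * ρf) := by
                rw [hρf, Finsupp.sum]
            _ ≤ ‖q‖ ^ s * ((‖q‖ ^ (s * (s - 1) / 2) * ρf ^ s) * ρf) := by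
                gcongr
            _ = ‖q‖ ^ s * ‖q‖ ^ (s * (s - 1) / 2) * (ρf ^ s * ρf) := by ring
  intro s hs
  obtain ⟨ι, S, c, e, hS, hrep, hbound⟩ := key s hs
  calc ‖f ^ s‖ = ‖∑ j ∈ S, c j • (x ^ (e j).1 * y ^ (e j).2)‖ := by rw [hrep]
    _ ≤ ∑ j ∈ S, ‖c j • (x ^ (e j).1 * y ^ (e j).2)‖ := norm_sum_le _ _
    _ ≤ ∑ j ∈ S, ‖c j‖ * ρ ^ ((e j).1 + (e j).2) := by
        refine Finset.sum_le_sum fun j hj => ?_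
        rw [norm_smul]
        refine mul_le_mul_of_nonneg_left ?_ (norm_nonneg _)
        have h1 : 0 < (e j).1 := lt_of_lt_of_le hs (hS j hj).1
        have h2 : 0 < (e j).2 := lt_of_lt_of_le hs (hS j hj).2
        calc ‖x ^ (e j).1 * y ^ (e j).2‖ ≤ ‖x ^ (e j).1‖ * ‖y ^ (e j).2‖ := norm_mul_le _ _
          _ ≤ ‖x‖ ^ (e j).1 * ‖y‖ ^ (e j).2 :=
              mul_le_mul (norm_pow_le' x h1) (norm_pow_le' y h2) (norm_nonneg _)
                (pow_nonneg (norm_nonneg x) _)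
          _ ≤ ρ ^ (e j).1 * ρ ^ (e j).2 := by
              gcongr
          _ = ρ ^ ((e j).1 + (e j).2) := (pow_add ρ _ _).symm
    _ ≤ ‖q‖ ^ (s * (s - 1) / 2) * ρf ^ s := hbound
end

section
/- Let q ∈ ℂ with |q| < 1 and let B be a complex unital Banach algebra containing elements x, y with y·x = q·(x·y). Then every finite sum f = Σ_{i,k≥1} a_{ik} x^i y^k (all indices i,k ≥ 1) is quasinilpotent in B, i.e., its spectral radius is 0. -/
/-!
Moving `y ^ k` past `x ^ i` costs the scalar `q ^ (k * i)`. Expanding `f ^ n` into monomials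
`x ^ I * y ^ K`, every one of the `n.choose 2` pairs of factors has to be commuted once, with
`k, i ≥ 1`, so `‖f ^ n‖ ≤ C ^ n * ‖q‖ ^ n.choose 2` where `C = ∑ ‖a (i, k)‖ * ‖x‖ ^ i * ‖y‖ ^ k`.
Hence `‖f ^ n‖ ^ (1 / n) ≤ C * √‖q‖ ^ (n - 1) → 0`, and the Gelfand formula gives spectral
radius `0`.
-/

open Filter Topology

section QCommute

variable {R B : Type*} [Monoid R] [Monoid B] [MulAction R B] [IsScalarTower R B B]
  [SMulCommClass R B B] {q : R} {x y : B}

theorem mul_pow_eq_smul_of_mul_eq_smul (h : y * x = q • (x * y)) (n : ℕ) :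
    y * x ^ n = q ^ n • (x ^ n * y) := by
  induction n with
  | zero => simp
  | succ n ih =>
    calc y * x ^ (n + 1) = y * x ^ n * x := by rw [pow_succ, mul_assoc]
      _ = q ^ n • (x ^ n * (y * x)) := by rw [ih, smul_mul_assoc, mul_assoc]
      _ = q ^ (n + 1) • (x ^ (n + 1) * y) := by
          rw [h, mul_smul_comm, smul_smul, ← pow_succ, pow_succ x, mul_assoc]

theorem pow_mul_eq_smul_of_mul_eq_smul (h : y * x = q • (x * y)) (n : ℕ) :
    y ^ n * x = q ^ n • (x * y ^ n) := by
  induction n with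
  | zero => simp
  | succ n ih =>
    calc y ^ (n + 1) * x = y ^ n * (y * x) := by rw [pow_succ, mul_assoc]
      _ = q • (y ^ n * x * y) := by rw [h, mul_smul_comm, mul_assoc]
      _ = q ^ (n + 1) • (x * y ^ (n + 1)) := by
          rw [ih, smul_mul_assoc, smul_smul, ← pow_succ', mul_assoc, ← pow_succ]

theorem pow_mul_pow_eq_smul_of_mul_eq_smul (h : y * x = q • (x * y)) (k i : ℕ) :
    y ^ k * x ^ i = q ^ (k * i) • (x ^ i * y ^ k) := by
  rw [pow_mul_eq_smul_of_mul_eq_smul (mul_pow_eq_smul_of_mul_eq_smul h i), ← pow_mul,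
    Nat.mul_comm i k]

theorem monomial_mul_monomial_of_mul_eq_smul (h : y * x = q • (x * y)) (i k i' k' : ℕ) :
    x ^ i * y ^ k * (x ^ i' * y ^ k') = q ^ (k * i') • (x ^ (i + i') * y ^ (k + k')) := by
  rw [mul_assoc, ← mul_assoc (y ^ k), pow_mul_pow_eq_smul_of_mul_eq_smul h, smul_mul_assoc,
    mul_smul_comm, pow_add, pow_add, mul_assoc, mul_assoc]

end QCommute

/-- The index type is existential because multiplying two expansions produces a product index
type. -/
def HasMonomialSum (𝕜 : Type*) {B : Type*} [Norm 𝕜] [NormedRing B] [SMul 𝕜 B] (x y : B)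
    (r s : ℕ) (D : ℝ) (g : B) : Prop :=
  ∃ (ι : Type) (T : Finset ι) (c : ι → 𝕜) (I K : ι → ℕ),
    (∀ j ∈ T, r ≤ I j ∧ s ≤ K j) ∧
    ∑ j ∈ T, ‖c j‖ * (‖x‖ ^ I j * ‖y‖ ^ K j) ≤ D ∧
    g = ∑ j ∈ T, c j • (x ^ I j * y ^ K j)

namespace HasMonomialSum

variable {𝕜 B : Type*} [NormedField 𝕜] [NormedRing B] [NormedAlgebra 𝕜 B] {x y : B}

theorem one : HasMonomialSum 𝕜 x y 0 0 1 1 :=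
  ⟨Unit, {()}, fun _ => 1, fun _ => 0, fun _ => 0, by simp, by simp, by simp⟩

theorem mul {q : 𝕜} (hq : ‖q‖ ≤ 1) (h : y * x = q • (x * y)) {r s r' s' : ℕ} {D E : ℝ}
    {g f : B} (hg : HasMonomialSum 𝕜 x y r s D g) (hf : HasMonomialSum 𝕜 x y r' s' E f) :
    HasMonomialSum 𝕜 x y (r + r') (s + s') (‖q‖ ^ (s * r') * D * E) (g * f) := by
  obtain ⟨ι, T, c, I, K, hIK, hD, rfl⟩ := hg
  obtain ⟨ι', T', c', I', K', hIK', hE, rfl⟩ := hf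
  refine ⟨ι × ι', T ×ˢ T', fun p => c p.1 * c' p.2 * q ^ (K p.1 * I' p.2),
    fun p => I p.1 + I' p.2, fun p => K p.1 + K' p.2, ?_, ?_, ?_⟩
  · rintro ⟨j, j'⟩ hp
    obtain ⟨hj, hj'⟩ := Finset.mem_product.1 hp
    exact ⟨add_le_add (hIK j hj).1 (hIK' j' hj').1, add_le_add (hIK j hj).2 (hIK' j' hj').2⟩
  · calc _ ≤ ∑ p ∈ T ×ˢ T', ‖q‖ ^ (s * r') * (‖c p.1‖ * (‖x‖ ^ I p.1 * ‖y‖ ^ K p.1) *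
            (‖c' p.2‖ * (‖x‖ ^ I' p.2 * ‖y‖ ^ K' p.2))) := by
          refine Finset.sum_le_sum fun p hp => ?_
          obtain ⟨hj, hj'⟩ := Finset.mem_product.1 hp
          have hqpow : ‖q ^ (K p.1 * I' p.2)‖ ≤ ‖q‖ ^ (s * r') := by
            rw [norm_pow]
            exact pow_le_pow_of_le_one (norm_nonneg q) hq
              (Nat.mul_le_mul (hIK _ hj).2 (hIK' _ hj').1)
          calc _ = ‖q ^ (K p.1 * I' p.2)‖ * (‖c p.1‖ * (‖x‖ ^ I p.1 * ‖y‖ ^ K p.1) *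
                (‖c' p.2‖ * (‖x‖ ^ I' p.2 * ‖y‖ ^ K' p.2))) := by
                rw [norm_mul, norm_mul, pow_add, pow_add]
                ring
            _ ≤ _ := by gcongr
      _ = ‖q‖ ^ (s * r') * ((∑ j ∈ T, ‖c j‖ * (‖x‖ ^ I j * ‖y‖ ^ K j)) *
            ∑ j' ∈ T', ‖c' j'‖ * (‖x‖ ^ I' j' * ‖y‖ ^ K' j')) := by
          rw [Finset.sum_mul_sum, Finset.sum_product, Finset.mul_sum]
          simp only [Finset.mul_sum]
      _ ≤ ‖q‖ ^ (s * r') * D * E := by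
          rw [mul_assoc]
          exact mul_le_mul_of_nonneg_left (mul_le_mul hD hE (Finset.sum_nonneg fun _ _ => by
            positivity) ((Finset.sum_nonneg fun _ _ => by positivity).trans hD)) (by positivity)
  · rw [Finset.sum_mul_sum, Finset.sum_product]
    refine Finset.sum_congr rfl fun j _ => Finset.sum_congr rfl fun j' _ => ?_
    rw [smul_mul_smul_comm, monomial_mul_monomial_of_mul_eq_smul h, smul_smul]

theorem pow {q : 𝕜} (hq : ‖q‖ ≤ 1) (h : y * x = q • (x * y)) {C : ℝ} {f : B}
    (hf : HasMonomialSum 𝕜 x y 1 1 C f) (n : ℕ) :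
    HasMonomialSum 𝕜 x y n n (C ^ n * ‖q‖ ^ n.choose 2) (f ^ n) := by
  induction n with
  | zero => simpa using one
  | succ n ih =>
    convert ih.mul hq h hf using 1
    · rw [Nat.choose_succ_succ' n 1, Nat.choose_one_right]
      ring
    · exact pow_succ f n

theorem norm_le {r s : ℕ} (hr : 1 ≤ r) (hs : 1 ≤ s) {D : ℝ} {g : B}
    (hg : HasMonomialSum 𝕜 x y r s D g) : ‖g‖ ≤ D := by
  obtain ⟨ι, T, c, I, K, hIK, hD, rfl⟩ := hg
  refine (norm_sum_le _ _).trans (le_trans (Finset.sum_le_sum fun j hj => ?_) hD)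
  rw [norm_smul]
  gcongr
  exact norm_mul_le_of_le (norm_pow_le' x (hr.trans (hIK j hj).1))
    (norm_pow_le' y (hs.trans (hIK j hj).2))

end HasMonomialSum

section SpectralRadius

variable {A : Type*} [NormedRing A] [NormedAlgebra ℂ A] [CompleteSpace A] {a : A}

theorem spectralRadius_eq_zero_of_norm_pow_le_pow {c : ℕ → ℝ} (hc : Tendsto c atTop (𝓝 0))
    (h : ∀ n, 1 ≤ n → ‖a ^ n‖ ≤ c n ^ n) : spectralRadius ℂ a = 0 := by
  have hlim : Tendsto (fun n => ENNReal.ofReal |c n|) atTop (𝓝 0) := by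
    simpa using ENNReal.tendsto_ofReal hc.abs
  refine le_antisymm (le_of_tendsto_of_tendsto
    (spectrum.pow_norm_pow_one_div_tendsto_nhds_spectralRadius a) hlim ?_) bot_le
  filter_upwards [eventually_ge_atTop 1] with n hn
  refine ENNReal.ofReal_le_ofReal ?_
  have hpow : ‖a ^ n‖ ≤ |c n| ^ n := (h n hn).trans (abs_pow (c n) n ▸ le_abs_self _)
  calc ‖a ^ n‖ ^ (1 / n : ℝ) ≤ (|c n| ^ n) ^ (1 / n : ℝ) :=
        Real.rpow_le_rpow (norm_nonneg _) hpow (by positivity)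
    _ = |c n| := by rw [one_div, Real.pow_rpow_inv_natCast (abs_nonneg _) (by omega)]

theorem spectralRadius_eq_zero_of_norm_pow_le_mul_pow_choose {C ρ : ℝ} (hρ0 : 0 ≤ ρ)
    (hρ : ρ < 1) (h : ∀ n, 1 ≤ n → ‖a ^ n‖ ≤ C ^ n * ρ ^ n.choose 2) :
    spectralRadius ℂ a = 0 := by
  refine spectralRadius_eq_zero_of_norm_pow_le_pow (c := fun n => C * √ρ ^ (n - 1)) ?_
    fun n hn => ?_
  · simpa using ((tendsto_pow_atTop_nhds_zero_of_lt_one (Real.sqrt_nonneg ρ)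
      (by simpa using Real.sqrt_lt_sqrt hρ0 hρ)).comp (tendsto_sub_atTop_nat 1)).const_mul C
  · have hchoose : 2 * n.choose 2 = (n - 1) * n := by
      rw [Nat.choose_two_right, Nat.mul_div_cancel' (Nat.even_mul_pred_self n).two_dvd,
        Nat.mul_comm]
    calc ‖a ^ n‖ ≤ C ^ n * ρ ^ n.choose 2 := h n hn
      _ = (C * √ρ ^ (n - 1)) ^ n := by
          rw [mul_pow, ← pow_mul, ← hchoose, pow_mul, Real.sq_sqrt hρ0]

end SpectralRadius

/-- In a complex unital Banach algebra with `y * x = q • (x * y)`, `|q| < 1`, every finite sum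
`f = Σ_{i,k ≥ 1} a_{ik} x^i y^k` is quasinilpotent, i.e. its spectral radius is `0`. -/
theorem quantum_plane_quasinilpotent {B : Type*} [NormedRing B] [NormedAlgebra ℂ B]
    [CompleteSpace B]
    (q : ℂ) (hq : ‖q‖ < 1) (x y : B) (h : y * x = q • (x * y))
    (a : ℕ × ℕ →₀ ℂ) (hsupp : ∀ p ∈ a.support, 1 ≤ p.1 ∧ 1 ≤ p.2) :
    spectralRadius ℂ (a.sum fun p c => c • (x ^ p.1 * y ^ p.2)) = 0 := by
  have hf : HasMonomialSum ℂ x y 1 1 (∑ p ∈ a.support, ‖a p‖ * (‖x‖ ^ p.1 * ‖y‖ ^ p.2))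
      (a.sum fun p c => c • (x ^ p.1 * y ^ p.2)) :=
    ⟨ℕ × ℕ, a.support, a, Prod.fst, Prod.snd, hsupp, le_rfl, rfl⟩
  exact spectralRadius_eq_zero_of_norm_pow_le_mul_pow_choose (norm_nonneg q) hq
    fun n hn => (hf.pow hq.le h n).norm_le hn hn
end

section
/- Let B be a complex unital Banach algebra and x, y ∈ B with x·y = q⁻¹·(y·x) for some q ∈ ℂ with q ≠ 0 and |q| ≠ 1. Then the spectrum of x·y equals {0}. -/
/-!
Since `y * x = q • (x * y)`, the spectrum of `y * x` is `q • σ(x * y)`, while `σ(x * y)` and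
`σ(y * x)` agree away from `0`. Hence the nonzero part of `σ(x * y)` is invariant under
multiplication by `q` and by `q⁻¹`, one of which has norm `> 1`; a bounded set with that property
contains no nonzero point. The spectrum is nonempty, so it is `{0}`.
-/

open Bornology

section Field

variable {𝕜 A : Type*} [Field 𝕜] [Ring A] [Algebra 𝕜 A]

theorem mul_mem_spectrum_mul_iff_of_mul_eq_smul {x y : A} {q : 𝕜} (hq : q ≠ 0)
    (h : y * x = q • (x * y)) {z : 𝕜} (hz : z ≠ 0) :
    q * z ∈ spectrum 𝕜 (x * y) ↔ z ∈ spectrum 𝕜 (x * y) := by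
  have hqz : q * z ∉ ({0} : Set 𝕜) := mul_ne_zero hq hz
  calc q * z ∈ spectrum 𝕜 (x * y)
      ↔ q * z ∈ spectrum 𝕜 (x * y) \ {0} := by rw [Set.mem_sdiff, and_iff_left hqz]
    _ ↔ q * z ∈ spectrum 𝕜 (y * x) \ {0} := by rw [spectrum.nonzero_mul_comm]
    _ ↔ (Units.mk0 q hq) • z ∈ spectrum 𝕜 ((Units.mk0 q hq) • (x * y)) := by
        rw [Set.mem_sdiff, and_iff_left hqz, h, Units.smul_mk0, Units.smul_mk0, smul_eq_mul]
    _ ↔ z ∈ spectrum 𝕜 (x * y) := spectrum.smul_mem_smul_iff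

end Field

section NormedField

variable {𝕜 : Type*} [NormedField 𝕜] {S : Set 𝕜}

theorem subset_zero_of_isBounded_of_mul_mem {r : 𝕜} (hr : 1 < ‖r‖) (hS : IsBounded S)
    (hmul : ∀ z ∈ S, z ≠ 0 → r * z ∈ S) : S ⊆ {0} := by
  intro z hz
  by_contra hz0
  have hpow : ∀ n : ℕ, r ^ n * z ∈ S := by
    intro n
    induction n with
    | zero => simpa using hz
    | succ n ih =>
      rw [pow_succ', mul_assoc]
      exact hmul _ ih (mul_ne_zero (pow_ne_zero n (norm_pos_iff.mp (one_pos.trans hr))) hz0)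
  obtain ⟨C, hC⟩ := hS.exists_norm_le
  have hz_pos : 0 < ‖z‖ := norm_pos_iff.mpr hz0
  obtain ⟨n, hn⟩ := pow_unbounded_of_one_lt (C / ‖z‖) hr
  have hle : ‖r‖ ^ n * ‖z‖ ≤ C := by simpa only [norm_mul, norm_pow] using hC _ (hpow n)
  exact hle.not_gt ((div_lt_iff₀ hz_pos).mp hn)

theorem subset_zero_of_isBounded_of_mul_mem_iff {q : 𝕜} (hq0 : q ≠ 0) (hq : ‖q‖ ≠ 1)
    (hS : IsBounded S) (hmul : ∀ z ≠ 0, q * z ∈ S ↔ z ∈ S) : S ⊆ {0} := by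
  rcases hq.lt_or_gt with hlt | hgt
  · refine subset_zero_of_isBounded_of_mul_mem (r := q⁻¹) ?_ hS fun z hz hz0 ↦ ?_
    · rwa [norm_inv, one_lt_inv₀ (norm_pos_iff.mpr hq0)]
    · rwa [← hmul _ (mul_ne_zero (inv_ne_zero hq0) hz0), mul_inv_cancel_left₀ hq0]
  · exact subset_zero_of_isBounded_of_mul_mem hgt hS fun z hz hz0 ↦ (hmul z hz0).mpr hz

end NormedField

/-- In a complex unital Banach algebra, if `x * y = q⁻¹ • (y * x)` with `q ≠ 0` and `|q| ≠ 1`,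
then the spectrum of `x * y` equals `{0}`. -/
theorem spectrum_xy_eq_zero {B : Type*} [NormedRing B] [NormedAlgebra ℂ B]
    [CompleteSpace B] [Nontrivial B]
    (q : ℂ) (hq0 : q ≠ 0) (hq1 : ‖q‖ ≠ 1) (x y : B) (h : x * y = q⁻¹ • (y * x)) :
    spectrum ℂ (x * y) = {0} := by
  have hyx : y * x = q • (x * y) := by rw [h, smul_inv_smul₀ hq0]
  refine (Set.Nonempty.subset_singleton_iff (spectrum.nonempty _)).mp ?_
  exact subset_zero_of_isBounded_of_mul_mem_iff hq0 hq1 (spectrum.isBounded _)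
    fun z hz ↦ mul_mem_spectrum_mul_iff_of_mul_eq_smul hq0 hyx hz
end

section
/- Let B be a complex unital Banach algebra generated as a Banach algebra by elements x, y with x·y = q⁻¹·y·x (q ≠ 0, |q| < 1). If the closed two-sided ideal generated by x·y is contained in the Jacobson radical of B, then B is commutative modulo its Jacobson radical. -/
/-- Let `B` be a complex unital Banach algebra topologically generated by `x, y` with
`x * y = q⁻¹ • (y * x)`, `0 < |q| < 1`.  If the closed two-sided ideal generated by `x * y`
is contained in the Jacobson radical of `B`, then `B` is commutative modulo its Jacobson
radical. -/
theorem commutative_mod_radical {B : Type*} [NormedRing B] [NormedAlgebra ℂ B]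
    (q : ℂ) (hq0 : 0 < ‖q‖) (hq1 : ‖q‖ < 1)
    (x y : B) (h : x * y = q⁻¹ • (y * x))
    (hgen : (Algebra.adjoin ℂ ({x, y} : Set B)).topologicalClosure = ⊤)
    (hI : closure ((TwoSidedIdeal.span {x * y} : TwoSidedIdeal B) : Set B) ⊆
      (Ideal.jacobson (⊥ : Ideal B) : Set B)) :
    ∀ a b : B, a * b - b * a ∈ Ideal.jacobson (⊥ : Ideal B) := by
  set I : TwoSidedIdeal B := TwoSidedIdeal.span {x * y} with hIdef
  have hq : q ≠ 0 := by intro h0; simp [h0] at hq0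
  have hxy : x * y ∈ I := TwoSidedIdeal.subset_span rfl
  have hyx : y * x ∈ I := by
    have : y * x = q • (x * y) := by
      rw [h, smul_smul, mul_inv_cancel₀ hq, one_smul]
    rw [this, Algebra.smul_def]
    exact I.mul_mem_left _ _ hxy
  -- commutators of generators lie in I
  have hgenc : ∀ s ∈ ({x, y} : Set B), ∀ t ∈ ({x, y} : Set B), s * t - t * s ∈ I := by
    rintro s (rfl | rfl) t (rfl | rfl)
    · simp [I.zero_mem]
    · exact I.sub_mem hxy hyx
    · exact I.sub_mem hyx hxy
    · simp [I.zero_mem]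
  -- commutators of adjoin elements lie in I
  have key : ∀ a ∈ Algebra.adjoin ℂ ({x, y} : Set B),
      ∀ b ∈ Algebra.adjoin ℂ ({x, y} : Set B), a * b - b * a ∈ I := by
    intro a ha
    induction ha using Algebra.adjoin_induction with
    | mem s hs =>
      intro b hb
      induction hb using Algebra.adjoin_induction with
      | mem t ht => exact hgenc s hs t ht
      | algebraMap r => simpa [Algebra.commutes] using I.zero_mem
      | add b c _ _ hb hc =>
        have : s * (b + c) - (b + c) * s = (s * b - b * s) + (s * c - c * s) := by noncomm_ring
        rw [this]; exact I.add_mem hb hc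
      | mul b c _ _ hb hc =>
        have : s * (b * c) - (b * c) * s = (s * b - b * s) * c + b * (s * c - c * s) := by
          noncomm_ring
        rw [this]
        exact I.add_mem (I.mul_mem_right _ _ hb) (I.mul_mem_left _ _ hc)
    | algebraMap r => intro b hb; simpa [Algebra.commutes] using I.zero_mem
    | add a c _ _ ha hc =>
      intro b hb
      have : (a + c) * b - b * (a + c) = (a * b - b * a) + (c * b - b * c) := by noncomm_ring
      rw [this]; exact I.add_mem (ha b hb) (hc b hb)
    | mul a c _ _ ha hc =>
      intro b hb
      have : (a * c) * b - b * (a * c) = a * (c * b - b * c) + (a * b - b * a) * c := by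
        noncomm_ring
      rw [this]
      exact I.add_mem (I.mul_mem_left _ _ (hc b hb)) (I.mul_mem_right _ _ (ha b hb))
  -- pass to closures
  intro a b
  apply hI
  have hcl : IsClosed {p : B × B | p.1 * p.2 - p.2 * p.1 ∈ closure (I : Set B)} := by
    have : Continuous fun p : B × B => p.1 * p.2 - p.2 * p.1 := by continuity
    exact IsClosed.preimage this isClosed_closure
  have hmem : ∀ z : B, z ∈ closure ((Algebra.adjoin ℂ ({x, y} : Set B)) : Set B) := by
    intro z
    have := hgen ▸ (Algebra.mem_top : z ∈ (⊤ : Subalgebra ℂ B))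
    exact this
  have hsub : ((Algebra.adjoin ℂ ({x, y} : Set B)) : Set B) ×ˢ
      ((Algebra.adjoin ℂ ({x, y} : Set B)) : Set B) ⊆
      {p : B × B | p.1 * p.2 - p.2 * p.1 ∈ closure (I : Set B)} := by
    rintro ⟨a, b⟩ ⟨ha, hb⟩
    exact subset_closure (key a ha b hb)
  have : (a, b) ∈ closure (((Algebra.adjoin ℂ ({x, y} : Set B)) : Set B) ×ˢ
      ((Algebra.adjoin ℂ ({x, y} : Set B)) : Set B)) := by
    rw [closure_prod_eq]
    exact ⟨hmem a, hmem b⟩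
  exact hcl.closure_subset_iff.mpr hsub this
end
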